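/- arXiv:2109.05556 — 3 statements merged into one kernel-verified Lean document; each statement's English description precedes it below -/
import Mathlib

section
/- Let V be an (A,G)-module and let G₀ be a normal subgroup of G of finite index. Then Len_{A,G}(V) ≤ Len_{A,G₀}(V) ≤ [G:G₀] · Len_{A,G}(V). (Lemma 2.3 of the paper, where G is an affine algebraic group acting rationally on A and G₀ is its identity component, which is a normal subgroup of finite index.) -/
/-!
A `G`-stable submodule is `G₀`-stable, whence the first inequality. For the second, work in the
modular lattices of `G`-stable and of `G₀`-stable submodules and bound the `G₀`-height of `T` by
that of `U` plus `[G:G₀]` whenever `U ⋖ T` among `G`-stable submodules. By Zorn's lemma there is a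
`G₀`-stable `N` with `U ≤ N ⋖ T`: over `U`, the submodule `T` is generated by the `G`-orbit of any
`x ∈ T \ U`, hence as a `G₀`-module by the finitely many `σ q x` for coset representatives `q`,
so `T` is compact above `U`. The translates `g N` depend only on `g G₀`, are `G₀`-stable
(normality) and covered by `T`; their intersection is `G`-stable and lies between `U` and `N`, so it
is `U`. Intersecting `T` with the `[G:G₀]` translates one at a time descends from `T` to `U` in
steps that, by modularity, are covers or equalities. These bounds add up along a maximal chain
of `G`-stable submodules.
-/

/-- A submodule `W` of an `A`-module `V` is stable under a `k`-linear action
`σ` of a group `G` on `V`. -/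
def IsStableSubmodule (A : Type*) {k G V : Type*} [Field k] [Group G] [AddCommGroup V]
    [Module k V] [Ring A] [Module A V]
    (σ : G →* (V ≃ₗ[k] V)) (W : Submodule A V) : Prop :=
  ∀ g : G, ∀ v ∈ W, σ g v ∈ W

/-- The length `Len_{A,G}(V)` of an `(A,G)`-module `V`: the supremum of all `n`
for which there exists a strictly increasing chain `W₀ ⊊ W₁ ⊊ ⋯ ⊊ Wₙ` of
`G`-stable `A`-submodules of `V`. -/
noncomputable def lenAG (A : Type*) {k G V : Type*} [Field k] [Group G] [AddCommGroup V]
    [Module k V] [Ring A] [Module A V] (σ : G →* (V ≃ₗ[k] V)) : ℕ∞ :=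
  ⨆ (n : ℕ) (_ : ∃ W : Fin (n + 1) → Submodule A V,
      StrictMono W ∧ ∀ i, IsStableSubmodule A σ (W i)), (n : ℕ∞)

open Order Submodule

section ModularLattice

variable {α : Type*} [Lattice α] [IsModularLattice α]

theorem inf_wcovBy_of_wcovBy_of_le {c t x : α} (hct : c ⩿ t) (hxt : x ≤ t) : x ⊓ c ⩿ x := by
  by_cases hxc : x ≤ c
  · rw [inf_eq_left.2 hxc]
    exact WCovBy.refl x
  have hsup : c ⊔ x = t :=
    (hct.eq_or_eq le_sup_left (sup_le hct.le hxt)).resolve_left fun h ↦ hxc (h ▸ le_sup_right)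
  rw [inf_comm]
  exact (inf_covBy_of_covBy_sup_left (hsup ▸ hct.covBy_of_lt (hsup ▸ left_lt_sup.2 hxc))).wcovBy

theorem height_le_height_add_one_of_wcovBy {a b : α} (hab : a ⩿ b) : height b ≤ height a + 1 := by
  suffices key : ∀ n : ℕ, ∀ a b : α, a ⩿ b → height a = n → height b ≤ n + 1 by
    cases h : height a with
    | top => simp
    | coe n => exact key n a b hab h
  intro n
  induction n using Nat.strong_induction_on with | _ n ih =>
  intro a b hab ha
  rw [← ENat.natCast_one, ← ENat.natCast_add, height_le_coe_iff]
  intro y hyb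
  rw [ENat.natCast_add, ENat.natCast_one, ENat.lt_add_one_iff (ENat.natCast_ne_top n)]
  by_cases hya : y ≤ a
  · exact ha ▸ height_mono hya
  have hcov : y ⊓ a ⋖ y :=
    (inf_wcovBy_of_wcovBy_of_le hab hyb.le).covBy_of_lt (inf_lt_left.2 hya)
  have hlt : y ⊓ a < a := inf_le_right.lt_of_ne fun h ↦
    hya ((hab.eq_or_eq (h ▸ inf_le_left) hyb.le).resolve_right hyb.ne ▸ le_rfl)
  obtain ⟨m, hm⟩ := ENat.ne_top_iff_exists.1
    (ne_top_of_le_ne_top (ha ▸ ENat.natCast_ne_top n) (height_mono hlt.le))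
  have hmn : m < n := by
    have := height_strictMono hlt (hm ▸ ENat.natCast_lt_top m)
    rwa [← hm, ha, ENat.natCast_lt_natCast] at this
  calc height y ≤ m + 1 := ih m hmn _ _ hcov.wcovBy hm.symm
    _ ≤ n := by exact_mod_cast hmn

theorem height_le_height_inf_add_card [OrderTop α] {ι : Type*} (s : Finset ι) (c : ι → α) {t : α}
    (h : ∀ i ∈ s, c i ⩿ t) : height t ≤ height (t ⊓ s.inf c) + s.card := by
  classical
  induction s using Finset.induction_on with
  | empty => simp
  | insert i s hi ih =>
    have hwcov : t ⊓ s.inf c ⊓ c i ⩿ t ⊓ s.inf c :=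
      inf_wcovBy_of_wcovBy_of_le (h i (s.mem_insert_self i)) inf_le_left
    calc height t ≤ height (t ⊓ s.inf c) + s.card := ih fun j hj ↦ h j (s.mem_insert_of_mem hj)
      _ ≤ height (t ⊓ s.inf c ⊓ c i) + 1 + s.card := by
        gcongr
        exact height_le_height_add_one_of_wcovBy hwcov
      _ = height (t ⊓ (insert i s).inf c) + (insert i s).card := by
        rw [Finset.inf_insert, Finset.card_insert_of_notMem hi, inf_comm (c i), ← inf_assoc]
        push_cast
        ring

end ModularLattice

instance CompleteSublattice.isModularLattice {α : Type*} [CompleteLattice α] [IsModularLattice α]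
    (L : CompleteSublattice α) : IsModularLattice L :=
  ⟨fun y _ hxz ↦ sup_inf_le_assoc_of_le (y : α) hxz⟩

theorem height_le_mul_height_of_covBy {α β : Type*} [PartialOrder α] [Preorder β] (f : α → β)
    {d : ℕ} (hd : d ≠ 0) (hmin : ∀ a, IsMin a → IsMin (f a))
    (hcov : ∀ a b, a ⋖ b → height (f b) ≤ height (f a) + d) (a : α) :
    height (f a) ≤ d * height a := by
  cases h : height a with
  | top => simp [ENat.mul_top (by exact_mod_cast hd : (d : ℕ∞) ≠ 0)]
  | coe n =>
    induction n generalizing a with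
    | zero => simp [height_eq_zero.2 (hmin a (height_eq_zero.1 (by exact_mod_cast h)))]
    | succ n ih =>
      obtain ⟨-, ⟨b, hba, hb⟩, hle⟩ := height_eq_coe_add_one_iff.1 (by exact_mod_cast h)
      have hcov' : b ⋖ a := ⟨hba, fun c hbc hca ↦
        (hle c hca).not_gt (hb ▸ height_strictMono hbc (hb ▸ ENat.natCast_lt_top n))⟩
      calc height (f a) ≤ height (f b) + d := hcov b a hcov'
        _ ≤ d * n + d := by
          gcongr
          exact ih b hb
        _ = d * ↑(n + 1) := by
          push_cast
          ring

section StableSubmodules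

variable {k A G V : Type*} [Field k] [Ring A] [Group G] [AddCommGroup V] [Module k V]
  [Module A V] {σ : G →* (V ≃ₗ[k] V)}

theorem map_mul_apply (g h : G) (v : V) : σ (g * h) v = σ g (σ h v) := by
  rw [map_mul, LinearEquiv.mul_apply]

theorem IsStableSubmodule.sSup {s : Set (Submodule A V)} (hs : ∀ W ∈ s, IsStableSubmodule A σ W) :
    IsStableSubmodule A σ (sSup s) := by
  intro g v hv
  rw [sSup_eq_iSup'] at hv ⊢
  refine iSup_induction _ (motive := fun v ↦ σ g v ∈ ⨆ W : s, (W : Submodule A V)) hv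
    (fun W v hv ↦ mem_iSup_of_mem W (hs W W.2 g v hv)) (by simp) fun v w hv hw ↦ ?_
  simpa using add_mem hv hw

theorem IsStableSubmodule.sInf {s : Set (Submodule A V)} (hs : ∀ W ∈ s, IsStableSubmodule A σ W) :
    IsStableSubmodule A σ (sInf s) := fun g v hv ↦
  mem_sInf.2 fun W hW ↦ hs W hW g v (mem_sInf.1 hv W hW)

variable (A σ) in
def stableSubmodules : CompleteSublattice (Submodule A V) :=
  .mk' {W | IsStableSubmodule A σ W} (fun _ hs ↦ .sSup hs) (fun _ hs ↦ .sInf hs)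

theorem lenAG_eq_height_top : lenAG A σ = height (⊤ : stableSubmodules A σ) := by
  apply le_antisymm
  · refine iSup₂_le fun n ⟨W, hW, hstab⟩ ↦ ?_
    exact length_le_height (p := LTSeries.mk n (fun i ↦ ⟨W i, hstab i⟩) fun i j hij ↦ hW hij)
      le_top
  · exact height_le fun p _ ↦ le_iSup₂_of_le p.length
      ⟨fun i ↦ p i, fun i j hij ↦ p.strictMono hij, fun i ↦ (p i).2⟩ le_rfl

def restrictStable {H : Type*} [Group H] (φ : H →* G) (W : stableSubmodules A σ) :
    stableSubmodules A (σ.comp φ) :=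
  ⟨W, fun h ↦ W.2 (φ h)⟩

theorem restrictStable_strictMono {H : Type*} [Group H] (φ : H →* G) :
    StrictMono (restrictStable (A := A) (σ := σ) φ) := fun _ _ h ↦ h

theorem forall_apply_mem_of_forall_out_apply_mem (G₀ : Subgroup G) [G₀.Normal] {N : Submodule A V}
    (hN : IsStableSubmodule A (σ.comp G₀.subtype) N) {x : V}
    (hx : ∀ q : G ⧸ G₀, σ q.out x ∈ N) (g : G) : σ g x ∈ N := by
  obtain ⟨h, hh⟩ := QuotientGroup.mk_out_eq_mul G₀ g
  have hconj : g * (h : G)⁻¹ * g⁻¹ ∈ G₀ := ‹G₀.Normal›.conj_mem _ (inv_mem h.2) g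
  have : σ (g * (h : G)⁻¹ * g⁻¹) (σ (g * h) x) ∈ N := hh ▸ hN ⟨_, hconj⟩ _ (hx g)
  rwa [← map_mul_apply, show g * (h : G)⁻¹ * g⁻¹ * (g * h) = g by group] at this

section Translate

variable [Algebra k A] {ρ : G →* (A ≃ₐ[k] A)}
  (hc : ∀ (g : G) (a : A) (v : V), σ g (a • v) = ρ g a • σ g v)

@[simps]
def actionSemilinearMap (g : G) : V →ₛₗ[((ρ g : A ≃ₐ[k] A) : A →+* A)] V where
  toFun := σ g
  map_add' := map_add (σ g)
  map_smul' := hc g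

/-- The image of a submodule under `σ g`, written as its preimage under `σ g⁻¹`. -/
def translateSubmodule (g : G) : Submodule A V ≃o Submodule A V where
  toFun W := W.comap (actionSemilinearMap hc g⁻¹)
  invFun W := W.comap (actionSemilinearMap hc g)
  left_inv W := by
    ext v
    simp
  right_inv W := by
    ext v
    simp
  map_rel_iff' {W₁ W₂} := by
    refine ⟨fun h v hv ↦ ?_, fun h ↦ comap_mono h⟩
    simpa using @h (σ g v) (by simpa using hv)

theorem mem_translateSubmodule {g : G} {W : Submodule A V} {v : V} :
    v ∈ translateSubmodule hc g W ↔ σ g⁻¹ v ∈ W := Iff.rfl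

theorem translateSubmodule_eq_self {g : G} {W : Submodule A V} (h₁ : ∀ v ∈ W, σ g v ∈ W)
    (h₂ : ∀ v ∈ W, σ g⁻¹ v ∈ W) : translateSubmodule hc g W = W := by
  ext v
  refine ⟨fun hv ↦ ?_, h₂ v⟩
  simpa using h₁ _ ((mem_translateSubmodule hc).1 hv)

theorem IsStableSubmodule.translateSubmodule_eq {W : Submodule A V}
    (hW : IsStableSubmodule A σ W) (g : G) : translateSubmodule hc g W = W :=
  translateSubmodule_eq_self hc (hW g) (hW g⁻¹)

theorem translateSubmodule_one (W : Submodule A V) : translateSubmodule hc 1 W = W := by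
  ext v
  simp [mem_translateSubmodule]

theorem translateSubmodule_mul (g h : G) (W : Submodule A V) :
    translateSubmodule hc (g * h) W = translateSubmodule hc g (translateSubmodule hc h W) := by
  ext v
  simp only [mem_translateSubmodule, mul_inv_rev, map_mul_apply]

theorem translateSubmodule_mul_of_mem {G₀ : Subgroup G} {W : Submodule A V}
    (hW : IsStableSubmodule A (σ.comp G₀.subtype) W) (g : G) {h : G} (hh : h ∈ G₀) :
    translateSubmodule hc (g * h) W = translateSubmodule hc g W := by
  rw [translateSubmodule_mul,
    translateSubmodule_eq_self hc (g := h) (hW ⟨h, hh⟩) (hW ⟨h⁻¹, inv_mem hh⟩)]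

theorem iInf_translateSubmodule_out {G₀ : Subgroup G} {W : Submodule A V}
    (hW : IsStableSubmodule A (σ.comp G₀.subtype) W) :
    ⨅ q : G ⧸ G₀, translateSubmodule hc q.out W = ⨅ g, translateSubmodule hc g W := by
  refine le_antisymm (le_iInf fun g ↦ ?_) (le_iInf fun q ↦ iInf_le _ q.out)
  obtain ⟨h, hh⟩ := QuotientGroup.mk_out_eq_mul G₀ g
  exact (iInf_le _ (g : G ⧸ G₀)).trans_eq (by rw [hh, translateSubmodule_mul_of_mem hc hW g h.2])

theorem isStableSubmodule_iInf_translateSubmodule (W : Submodule A V) :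
    IsStableSubmodule A σ (⨅ g, translateSubmodule hc g W) := by
  intro h v hv
  simp only [mem_iInf, mem_translateSubmodule] at hv ⊢
  intro g
  simpa [map_mul_apply] using hv (h⁻¹ * g)

theorem IsStableSubmodule.translateSubmodule {G₀ : Subgroup G} [G₀.Normal] {W : Submodule A V}
    (hW : IsStableSubmodule A (σ.comp G₀.subtype) W) (g : G) :
    IsStableSubmodule A (σ.comp G₀.subtype) (translateSubmodule hc g W) := by
  intro h v hv
  rw [mem_translateSubmodule] at hv ⊢
  have hconj : g⁻¹ * h * g ∈ G₀ := by simpa using ‹G₀.Normal›.conj_mem h h.2 g⁻¹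
  simpa [← map_mul_apply] using hW ⟨_, hconj⟩ _ hv

def translateStable (G₀ : Subgroup G) [G₀.Normal] (g : G) :
    stableSubmodules A (σ.comp G₀.subtype) ≃o stableSubmodules A (σ.comp G₀.subtype) where
  toFun W := ⟨translateSubmodule hc g W, IsStableSubmodule.translateSubmodule hc W.2 g⟩
  invFun W := ⟨translateSubmodule hc g⁻¹ W, IsStableSubmodule.translateSubmodule hc W.2 g⁻¹⟩
  left_inv W := Subtype.ext <| by simp [← translateSubmodule_mul, translateSubmodule_one]
  right_inv W := Subtype.ext <| by simp [← translateSubmodule_mul, translateSubmodule_one]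
  map_rel_iff' := (translateSubmodule hc g).le_iff_le

theorem translateStable_restrictStable (G₀ : Subgroup G) [G₀.Normal] (g : G)
    (T : stableSubmodules A σ) :
    translateStable hc G₀ g (restrictStable G₀.subtype T) = restrictStable G₀.subtype T :=
  Subtype.ext (IsStableSubmodule.translateSubmodule_eq hc T.2 g)

def orbitSubmodule (x : V) : stableSubmodules A σ :=
  ⟨span A (Set.range fun g ↦ σ g x), by
    intro h v hv
    induction hv using span_induction with
    | mem v hv =>
      obtain ⟨g, rfl⟩ := hv
      exact subset_span ⟨h * g, map_mul_apply h g x⟩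
    | zero => simp
    | add v w _ _ hv hw => simpa using add_mem hv hw
    | smul a v _ hv =>
      rw [hc]
      exact smul_mem _ _ hv⟩

theorem sup_orbitSubmodule_eq_of_covBy {U T : stableSubmodules A σ} (hUT : U ⋖ T) {x : V}
    (hxT : x ∈ (T : Submodule A V)) (hxU : x ∉ (U : Submodule A V)) :
    U ⊔ orbitSubmodule hc x = T := by
  have hxO : x ∈ (orbitSubmodule hc x : Submodule A V) := subset_span ⟨1, by simp⟩
  have hUO : U < U ⊔ orbitSubmodule hc x := left_lt_sup.2 fun h ↦ hxU (h hxO)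
  refine (hUT.eq_or_eq hUO.le (sup_le hUT.le ?_)).resolve_left hUO.ne'
  exact span_le.2 (Set.range_subset_iff.2 fun g ↦ T.2 g x hxT)

end Translate

section FiniteIndex

variable [Algebra k A] {ρ : G →* (A ≃ₐ[k] A)} (G₀ : Subgroup G) [G₀.Normal] [G₀.FiniteIndex]

theorem exists_le_of_covBy_of_le_sSup
    (hc : ∀ (g : G) (a : A) (v : V), σ g (a • v) = ρ g a • σ g v)
    {U T : stableSubmodules A σ} (hUT : U ⋖ T) {c : Set (stableSubmodules A (σ.comp G₀.subtype))}
    (hne : c.Nonempty) (hdir : DirectedOn (· ≤ ·) c)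
    (hUc : ∀ N ∈ c, restrictStable G₀.subtype U ≤ N) (hTc : restrictStable G₀.subtype T ≤ sSup c) :
    ∃ N ∈ c, restrictStable G₀.subtype T ≤ N := by
  obtain ⟨x, hxT, hxU⟩ := SetLike.exists_of_lt (Subtype.coe_lt_coe.2 hUT.lt)
  have hcompact := finite_span_isCompactElement (R := A)
    (Set.range fun q : G ⧸ G₀ ↦ σ q.out x) (Set.finite_range _)
  have hFc : span A (Set.range fun q : G ⧸ G₀ ↦ σ q.out x) ≤ sSup ((↑) '' c) :=
    le_trans (b := (T : Submodule A V))
      (span_le.2 (Set.range_subset_iff.2 fun q ↦ T.2 q.out x hxT))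
      ((Subtype.coe_le_coe.2 hTc).trans (CompleteSublattice.coe_sSup c).le)
  obtain ⟨_, ⟨N, hNc, rfl⟩, hN⟩ :=
    (CompleteLattice.isCompactElement_iff_le_of_directed_sSup_le _ _).1 hcompact _
      (hne.image _) ((directedOn_image (f := Subtype.val)).2 hdir) hFc
  refine ⟨N, hNc, Subtype.coe_le_coe.1 ?_⟩
  have hT : (T : Submodule A V) = U ⊔ orbitSubmodule hc x := by
    rw [← sup_orbitSubmodule_eq_of_covBy hc hUT hxT hxU]
  change (T : Submodule A V) ≤ N
  rw [hT]
  refine sup_le (Subtype.coe_le_coe.2 (hUc N hNc)) (span_le.2 (Set.range_subset_iff.2 fun g ↦ ?_))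
  exact forall_apply_mem_of_forall_out_apply_mem G₀ N.2 (fun q ↦ hN (subset_span ⟨q, rfl⟩)) g

theorem exists_le_covBy_restrictStable
    (hc : ∀ (g : G) (a : A) (v : V), σ g (a • v) = ρ g a • σ g v)
    {U T : stableSubmodules A σ} (hUT : U ⋖ T) :
    ∃ N, restrictStable G₀.subtype U ≤ N ∧ N ⋖ restrictStable G₀.subtype T := by
  set S := {N | restrictStable G₀.subtype U ≤ N ∧ N < restrictStable G₀.subtype T}
  have hchains : ∀ c ⊆ S, IsChain (· ≤ ·) c → ∀ y ∈ c, ∃ ub ∈ S, ∀ N ∈ c, N ≤ ub := by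
    intro c hcS hchain y hy
    refine ⟨sSup c, ⟨(hcS hy).1.trans (le_sSup hy), ?_⟩, fun _ ↦ le_sSup⟩
    refine (sSup_le fun N hN ↦ (hcS hN).2.le).lt_of_ne fun hsup ↦ ?_
    obtain ⟨N, hNc, hTN⟩ := exists_le_of_covBy_of_le_sSup G₀ hc hUT ⟨y, hy⟩ hchain.directedOn
      (fun N hN ↦ (hcS hN).1) hsup.ge
    exact (hcS hNc).2.not_ge hTN
  obtain ⟨N, -, hN⟩ := zorn_le_nonempty₀ S hchains _ ⟨le_rfl, restrictStable_strictMono _ hUT.lt⟩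
  exact ⟨N, hN.prop.1, hN.prop.2, fun Y hNY hYT ↦
    hNY.not_ge (hN.2 ⟨hN.prop.1.trans hNY.le, hYT⟩ hNY.le)⟩

theorem height_restrictStable_le_add_index
    (hc : ∀ (g : G) (a : A) (v : V), σ g (a • v) = ρ g a • σ g v)
    {U T : stableSubmodules A σ} (hUT : U ⋖ T) :
    height (restrictStable G₀.subtype T) ≤ height (restrictStable G₀.subtype U) + G₀.index := by
  obtain ⟨N, hUN, hNT⟩ := exists_le_covBy_restrictStable G₀ hc hUT
  have : Fintype (G ⧸ G₀) := Fintype.ofFinite _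
  let c (q : G ⧸ G₀) := translateStable hc G₀ q.out N
  have hcT (q : G ⧸ G₀) : c q ⩿ restrictStable G₀.subtype T := by
    simpa [c, translateStable_restrictStable] using
      (apply_wcovBy_apply_iff (translateStable hc G₀ q.out)).2 hNT.wcovBy
  let core : stableSubmodules A σ := ⟨_, isStableSubmodule_iInf_translateSubmodule hc N⟩
  have hcore : restrictStable G₀.subtype T ⊓ ⨅ q, c q = restrictStable G₀.subtype (T ⊓ core) :=
    Subtype.ext <| by
      show (T : Submodule A V) ⊓ ↑(⨅ q, c q) = T ⊓ core
      rw [CompleteSublattice.coe_iInf]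
      exact congrArg _ (iInf_translateSubmodule_out hc N.2)
  have hUcore : U ≤ T ⊓ core := le_inf hUT.le <| le_iInf fun g ↦
    (IsStableSubmodule.translateSubmodule_eq hc U.2 g).symm.le.trans
      ((translateSubmodule hc g).monotone hUN)
  have hcoreT : T ⊓ core ≠ T := fun h ↦ hNT.lt.not_ge <| by
    have : (T : Submodule A V) ≤ core := h ▸ inf_le_right
    exact this.trans ((iInf_le _ 1).trans (translateSubmodule_one hc N).le)
  calc height (restrictStable G₀.subtype T)
      ≤ height (restrictStable G₀.subtype T ⊓ Finset.univ.inf c) + Finset.univ.card :=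
        height_le_height_inf_add_card _ c fun q _ ↦ hcT q
    _ = height (restrictStable G₀.subtype U) + G₀.index := by
      rw [Finset.inf_univ_eq_iInf, hcore, (hUT.eq_or_eq hUcore inf_le_left).resolve_right hcoreT,
        Finset.card_univ, Subgroup.index, Nat.card_eq_fintype_card]

end FiniteIndex

end StableSubmodules

theorem lenAG_le_lenAG_subgroup_le_index_mul_general
    {k A G V : Type*} [Field k] [Ring A] [Algebra k A] [Group G]
    [AddCommGroup V] [Module k V] [Module A V]
    (ρ : G →* (A ≃ₐ[k] A)) (σ : G →* (V ≃ₗ[k] V))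
    (hcompat : ∀ (g : G) (a : A) (v : V), σ g (a • v) = (ρ g a) • (σ g v))
    (G₀ : Subgroup G) [G₀.Normal] (hfin : G₀.index ≠ 0) :
    lenAG A σ ≤ lenAG A (σ.comp G₀.subtype) ∧
      lenAG A (σ.comp G₀.subtype) ≤ (G₀.index : ℕ∞) * lenAG A σ := by
  have : G₀.FiniteIndex := ⟨hfin⟩
  have htop : restrictStable G₀.subtype (⊤ : stableSubmodules A σ) = ⊤ := rfl
  rw [lenAG_eq_height_top, lenAG_eq_height_top, ← htop]
  refine ⟨height_le_height_apply_of_strictMono _ (restrictStable_strictMono _) ⊤, ?_⟩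
  refine height_le_mul_height_of_covBy _ hfin (fun a ha ↦ ?_)
    (fun _ _ ↦ height_restrictStable_le_add_index G₀ hcompat) ⊤
  rw [ha.eq_bot]
  exact isMin_bot

/-- Lemma 2.3: for a normal subgroup `G₀ ≤ G` of finite index and an
`(A,G)`-module `V`, one has
`Len_{A,G}(V) ≤ Len_{A,G₀}(V) ≤ [G:G₀] ⬝ Len_{A,G}(V)`. -/
theorem lenAG_le_lenAG_subgroup_le_index_mul
    {k A G V : Type*} [Field k] [Ring A] [Algebra k A] [Group G]
    [AddCommGroup V] [Module k V] [Module A V] [IsScalarTower k A V]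
    (ρ : G →* (A ≃ₐ[k] A)) (σ : G →* (V ≃ₗ[k] V))
    (hcompat : ∀ (g : G) (a : A) (v : V), σ g (a • v) = (ρ g a) • (σ g v))
    (G₀ : Subgroup G) [G₀.Normal] (hfin : G₀.index ≠ 0) :
    lenAG A σ ≤ lenAG A (σ.comp G₀.subtype) ∧
      lenAG A (σ.comp G₀.subtype) ≤ (G₀.index : ℕ∞) * lenAG A σ :=
  lenAG_le_lenAG_subgroup_le_index_mul_general ρ σ hcompat G₀ hfin
end

section
/- Let G₀ be a normal subgroup of G of finite index and let V be a simple (A,G)-module. Then V is a sum of simple G₀-stable A-submodules (i.e., V is semisimple as an (A,G₀)-module), and Len_{A,G₀}(V) ≤ [G:G₀]. (This is the key claim established in the proof of Lemma 2.3 of the paper.) -/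
set_option linter.unusedSectionVars false
set_option maxHeartbeats 1000000


/-- A `G`-stable `A`-submodule `W` of `V` is simple if it is nonzero and the
only `G`-stable `A`-submodules contained in it are `⊥` and `W` itself. -/
def IsSimpleStableSubmodule (A : Type*) {k G V : Type*} [Field k] [Group G] [AddCommGroup V]
    [Module k V] [Ring A] [Module A V]
    (σ : G →* (V ≃ₗ[k] V)) (W : Submodule A V) : Prop :=
  IsStableSubmodule A σ W ∧ W ≠ ⊥ ∧
    ∀ W' : Submodule A V, IsStableSubmodule A σ W' → W' ≤ W → W' = ⊥ ∨ W' = W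

theorem chain_bound_aux {L : Type*} [CompleteLattice L] [IsModularLattice L] (P : L → Prop)
    (hinf : ∀ x y, P x → P y → P (x ⊓ y)) (hsup : ∀ x y, P x → P y → P (x ⊔ y)) :
    ∀ (m : ℕ) (a b : L), a ≤ b →
      ∀ N : Fin m → L, (∀ i, P (N i)) → (∀ i, a ≤ N i) → (∀ i, N i ≤ b) →
      (∀ i, ∀ z, P z → N i ≤ z → z ≤ b → z = N i ∨ z = b) →
      b ⊓ (⨅ i, N i) = a →
      ∀ (n : ℕ) (W : Fin (n + 1) → L), StrictMono W → (∀ j, P (W j)) →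
        (∀ j, a ≤ W j) → (∀ j, W j ≤ b) → n ≤ m := by
  classical
  intro m
  induction m with
  | zero =>
    intro a b hab N _ _ _ _ hinfN n W hW _ hWa hWb
    rw [iInf_of_empty, inf_top_eq] at hinfN
    by_contra hc
    push_neg at hc
    have h01 : W ⟨0, by omega⟩ < W ⟨1, by omega⟩ := hW (by simp [Fin.lt_def])
    exact h01.not_ge ((hWb _).trans ((le_of_eq hinfN).trans (hWa _)))
  | succ m ih =>
    intro a b hab N hNP hNa hNb hNco hinfN n W hW hWP hWa hWb
    by_cases hball : ∀ i, N i = b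
    · have hb : b = a := by
        rw [← hinfN]
        simp only [hball]
        rw [iInf_const]
        exact (inf_idem b).symm
      by_contra hc
      push_neg at hc
      have h01 : W ⟨0, by omega⟩ < W ⟨1, by omega⟩ := hW (by simp [Fin.lt_def])
      exact h01.not_ge ((hWb _).trans ((le_of_eq hb).trans (hWa _)))
    · push_neg at hball
      obtain ⟨i₀, hi₀⟩ := hball
      set b' := N i₀ with hb'
      have hab' : a ≤ b' := hNa i₀
      have hb'b : b' ≤ b := hNb i₀
      have hb'P : P b' := hNP i₀
      -- the new coatom family inside b'
      set N' : Fin m → L := fun j => N (i₀.succAbove j) ⊓ b' with hN'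
      have hN'P : ∀ j, P (N' j) := fun j => hinf _ _ (hNP _) hb'P
      have hN'a : ∀ j, a ≤ N' j := fun j => le_inf (hNa _) hab'
      have hN'b : ∀ j, N' j ≤ b' := fun j => inf_le_right
      have hN'co : ∀ j, ∀ z, P z → N' j ≤ z → z ≤ b' → z = N' j ∨ z = b' := by
        intro j z hz h1 h2
        have hmod : (z ⊔ N (i₀.succAbove j)) ⊓ b' = z ⊔ N' j :=
          sup_inf_assoc_of_le _ h2
        have hz' : z = (z ⊔ N (i₀.succAbove j)) ⊓ b' := by
          rw [hmod, sup_eq_left.mpr h1]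
        rcases hNco (i₀.succAbove j) (z ⊔ N (i₀.succAbove j)) (hsup _ _ hz (hNP _))
            le_sup_right (sup_le (h2.trans hb'b) (hNb _)) with h | h
        · left
          have : z = N (i₀.succAbove j) ⊓ b' := by rw [hz', h]
          exact this
        · right
          rw [hz', h]
          exact inf_eq_right.mpr hb'b
      have hinfN' : b' ⊓ (⨅ j, N' j) = a := by
        apply le_antisymm
        · rw [← hinfN]
          refine le_inf (inf_le_left.trans hb'b) (le_iInf fun i => ?_)
          rcases eq_or_ne i i₀ with rfl | hne
          · exact inf_le_left
          · obtain ⟨j, rfl⟩ := Fin.exists_succAbove_eq hne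
            exact inf_le_right.trans ((iInf_le _ j).trans inf_le_left)
        · exact le_inf hab' (le_iInf fun j => hN'a j)
      -- now the chain
      set u : Fin (n + 1) → L := fun j => W j ⊓ b' with hu
      set v : Fin (n + 1) → L := fun j => W j ⊔ b' with hv
      have huP : ∀ j, P (u j) := fun j => hinf _ _ (hWP j) hb'P
      have hua : ∀ j, a ≤ u j := fun j => le_inf (hWa j) hab'
      have hub : ∀ j, u j ≤ b' := fun j => inf_le_right
      have humono : Monotone u := fun p q hpq => inf_le_inf_right _ (hW.monotone hpq)
      have hvmono : Monotone v := fun p q hpq => sup_le_sup_right (hW.monotone hpq) _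
      have hv2 : ∀ j, v j = b' ∨ v j = b := fun j =>
        hNco i₀ (v j) (hsup _ _ (hWP j) hb'P) le_sup_right (sup_le (hWb j) hb'b)
      have hstep : ∀ p q : Fin (n + 1), p < q → v p = v q → u p < u q := by
        intro p q hpq hvpq
        refine lt_of_le_of_ne (humono hpq.le) fun hupq => ?_
        have h1 : W q ≤ W p ⊔ b' := le_sup_left.trans (le_of_eq hvpq.symm)
        have h2 : (W p ⊔ b') ⊓ W q = W p ⊔ (b' ⊓ W q) :=
          sup_inf_assoc_of_le _ (hW hpq).le
        have h3 : W q = W p ⊔ (b' ⊓ W q) := by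
          rw [← h2, inf_eq_right.mpr h1]
        have h5 : W p ⊓ b' = W q ⊓ b' := hupq
        have h4 : W q ≤ W p := by
          calc W q = W p ⊔ (b' ⊓ W q) := h3
          _ = W p ⊔ (W p ⊓ b') := by rw [inf_comm, ← h5]
          _ ≤ W p := sup_le le_rfl inf_le_left
        exact (hW hpq).not_ge h4
      -- case split on whether v is constant
      by_cases hvconst : v ⟨0, by omega⟩ = v ⟨n, by omega⟩
      · have humonos : StrictMono u := by
          intro p q hpq
          refine hstep p q hpq ?_
          have l1 : v ⟨0, by omega⟩ ≤ v p := hvmono (by simp [Fin.le_def])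
          have l2 : v p ≤ v ⟨n, by omega⟩ := hvmono (by simp [Fin.le_def]; omega)
          have l3 : v ⟨0, by omega⟩ ≤ v q := hvmono (by simp [Fin.le_def])
          have l4 : v q ≤ v ⟨n, by omega⟩ := hvmono (by simp [Fin.le_def]; omega)
          have := hvconst
          have e1 : v p = v ⟨n, by omega⟩ := le_antisymm l2 (hvconst ▸ l1)
          have e2 : v q = v ⟨n, by omega⟩ := le_antisymm l4 (hvconst ▸ l3)
          rw [e1, e2]
        have := ih a b' hab' N' hN'P hN'a hN'b hN'co hinfN' n u humonos huP hua hub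
        omega
      · -- v 0 = b', v n = b, and there is a first switch
        have hv0 : v ⟨0, by omega⟩ = b' := by
          rcases hv2 ⟨0, by omega⟩ with h | h
          · exact h
          · exfalso
            apply hvconst
            rcases hv2 ⟨n, by omega⟩ with h' | h'
            · have : v ⟨0, by omega⟩ ≤ v ⟨n, by omega⟩ := hvmono (by simp [Fin.le_def])
              rw [h, h'] at this
              exact absurd (le_antisymm this hb'b).symm hi₀
            · rw [h, h']
        have hvn : v ⟨n, by omega⟩ = b := by
          rcases hv2 ⟨n, by omega⟩ with h | h
          · exact absurd (hv0.trans h.symm) hvconst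
          · exact h
        -- n ≥ 1
        have hn1 : 1 ≤ n := by
          rcases Nat.eq_zero_or_pos n with rfl | h
          · exact absurd rfl hvconst
          · exact h
        obtain ⟨n', rfl⟩ : ∃ n', n = n' + 1 := ⟨n - 1, by omega⟩
        -- first index where v = b
        have hTne : (Finset.univ.filter (fun j : Fin (n' + 2) => v j = b)).Nonempty :=
          ⟨⟨n' + 1, by omega⟩, by simp [hvn]⟩
        set t₀ : Fin (n' + 2) := Finset.min' _ hTne with ht₀
        have ht₀mem : v t₀ = b := by
          have := Finset.min'_mem _ hTne
          simpa using this
        have hvge : ∀ j, t₀ ≤ j → v j = b := by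
          intro j hj
          have h1 : v t₀ ≤ v j := hvmono hj
          rcases hv2 j with h | h
          · rw [ht₀mem] at h1; rw [h] at h1
            exact absurd (le_antisymm h1 hb'b).symm hi₀
          · exact h
        have hvlt : ∀ j, j < t₀ → v j = b' := by
          intro j hj
          rcases hv2 j with h | h
          · exact h
          · exact absurd (Finset.min'_le _ j (by simp [h])) (not_le.2 hj)
        have ht₀pos : (0 : ℕ) < (t₀ : ℕ) := by
          rcases Nat.eq_zero_or_pos (t₀ : ℕ) with h0 | h
          · exfalso
            have : t₀ ≤ ⟨0, by omega⟩ := Fin.le_def.mpr (show (t₀ : ℕ) ≤ 0 by omega)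
            have := hvge _ this
            rw [hv0] at this
            exact hi₀ this
          · exact h
        -- build chain of length n' + 1 inside [a, b']
        obtain ⟨W', hW'def⟩ : ∃ W' : Fin (n' + 1) → L, ∀ j : Fin (n' + 1),
            W' j = if (j : ℕ) + 1 < (t₀ : ℕ) then u ⟨(j : ℕ), by omega⟩
              else u ⟨(j : ℕ) + 1, by omega⟩ :=
          ⟨_, fun j => rfl⟩
        have hW'mono : StrictMono W' := by
          rw [Fin.strictMono_iff_lt_succ]
          intro i
          rw [hW'def, hW'def]
          simp only [Fin.coe_castSucc, Fin.val_succ]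
          split_ifs with c1 c2 c2
          · -- i+1 < t₀, i+2 < t₀
            refine hstep _ _ (Fin.mk_lt_mk.mpr (by omega)) ?_
            rw [hvlt _ (Fin.lt_def.mpr (show (i : ℕ) < (t₀ : ℕ) by omega)),
              hvlt _ (Fin.lt_def.mpr (show (i : ℕ) + 1 < (t₀ : ℕ) by omega))]
          · -- i+1 < t₀, ¬ i+2 < t₀ : u ⟨i⟩ < u ⟨i+1⟩ ≤ u ⟨i+2⟩
            have hlt : u ⟨(i : ℕ), by omega⟩ < u ⟨(i : ℕ) + 1, by omega⟩ := by
              refine hstep _ _ (Fin.mk_lt_mk.mpr (by omega)) ?_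
              rw [hvlt _ (Fin.lt_def.mpr (show (i : ℕ) < (t₀ : ℕ) by omega)),
                hvlt _ (Fin.lt_def.mpr (show (i : ℕ) + 1 < (t₀ : ℕ) by omega))]
            exact hlt.trans_le (humono (Fin.mk_le_mk.mpr (by omega)))
          · omega
          · -- ¬ i+1 < t₀ : u ⟨i+1⟩ < u ⟨i+2⟩, both v = b
            refine hstep _ _ (Fin.mk_lt_mk.mpr (by omega)) ?_
            rw [hvge _ (Fin.le_def.mpr (show (t₀ : ℕ) ≤ (i : ℕ) + 1 by omega)),
              hvge _ (Fin.le_def.mpr (show (t₀ : ℕ) ≤ (i : ℕ) + 1 + 1 by omega))]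
        have := ih a b' hab' N' hN'P hN'a hN'b hN'co hinfN' n' W'
          hW'mono (fun j => by rw [hW'def]; split_ifs <;> exact huP _)
          (fun j => by rw [hW'def]; split_ifs <;> exact hua _)
          (fun j => by rw [hW'def]; split_ifs <;> exact hub _)
        omega


section CliffAux
variable {k A G V : Type*} [Field k] [Ring A] [Algebra k A] [Group G]
    [AddCommGroup V] [Module k V] [Module A V] [IsScalarTower k A V]
    (ρ : G →* (A ≃ₐ[k] A)) (σ : G →* (V ≃ₗ[k] V))
    (hcompat : ∀ (g : G) (a : A) (v : V), σ g (a • v) = (ρ g a) • (σ g v))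

private theorem sigma_mul_apply (g g' : G) (x : V) : σ (g * g') x = σ g (σ g' x) := by
  rw [map_mul]; rfl

private theorem sigma_inv_cancel (g : G) (x : V) : σ g (σ g⁻¹ x) = x := by
  rw [← sigma_mul_apply, mul_inv_cancel, map_one]; rfl

private theorem sigma_inv_cancel' (g : G) (x : V) : σ g⁻¹ (σ g x) = x := by
  rw [← sigma_mul_apply, inv_mul_cancel, map_one]; rfl

/-- The translate of an `A`-submodule by a group element. -/
private def ctr (g : G) (W : Submodule A V) : Submodule A V where
  carrier := σ g '' W
  add_mem' := by
    rintro x y ⟨x', hx', rfl⟩ ⟨y', hy', rfl⟩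
    exact ⟨x' + y', W.add_mem hx' hy', map_add _ _ _⟩
  zero_mem' := ⟨0, W.zero_mem, map_zero _⟩
  smul_mem' := by
    rintro a x ⟨x', hx', rfl⟩
    refine ⟨ρ g⁻¹ a • x', W.smul_mem _ hx', ?_⟩
    rw [hcompat]
    congr 1
    show (ρ g * ρ g⁻¹) a = a
    rw [← map_mul, mul_inv_cancel, map_one]
    rfl

private theorem mem_ctr {g : G} {W : Submodule A V} {x : V} :
    x ∈ ctr ρ σ hcompat g W ↔ ∃ w ∈ W, σ g w = x := Iff.rfl

private theorem ctr_mono {g : G} {W W' : Submodule A V} (h : W ≤ W') :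
    ctr ρ σ hcompat g W ≤ ctr ρ σ hcompat g W' := by
  rintro x ⟨w, hw, rfl⟩
  exact ⟨w, h hw, rfl⟩

private theorem ctr_ctr (g g' : G) (W : Submodule A V) :
    ctr ρ σ hcompat g (ctr ρ σ hcompat g' W) = ctr ρ σ hcompat (g * g') W := by
  apply le_antisymm
  · rintro x ⟨y, ⟨w, hw, rfl⟩, rfl⟩
    exact ⟨w, hw, (sigma_mul_apply σ g g' w)⟩
  · rintro x ⟨w, hw, rfl⟩
    exact ⟨σ g' w, ⟨w, hw, rfl⟩, (sigma_mul_apply σ g g' w).symm⟩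

private theorem ctr_one (W : Submodule A V) : ctr ρ σ hcompat 1 W = W := by
  apply le_antisymm
  · rintro x ⟨w, hw, rfl⟩
    have : σ 1 w = w := by rw [map_one]; rfl
    rwa [this]
  · intro w hw
    exact ⟨w, hw, by rw [map_one]; rfl⟩

private theorem ctr_inv_cancel (g : G) (W : Submodule A V) :
    ctr ρ σ hcompat g⁻¹ (ctr ρ σ hcompat g W) = W := by
  rw [ctr_ctr, inv_mul_cancel, ctr_one]

private theorem ctr_cancel (g : G) (W : Submodule A V) :
    ctr ρ σ hcompat g (ctr ρ σ hcompat g⁻¹ W) = W := by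
  rw [ctr_ctr, mul_inv_cancel, ctr_one]

private theorem ctr_le_iff {g : G} {W W' : Submodule A V} :
    ctr ρ σ hcompat g W ≤ ctr ρ σ hcompat g W' ↔ W ≤ W' := by
  constructor
  · intro h
    have := ctr_mono ρ σ hcompat (g := g⁻¹) h
    rwa [ctr_inv_cancel, ctr_inv_cancel] at this
  · exact ctr_mono ρ σ hcompat

private theorem ctr_bot (g : G) : ctr ρ σ hcompat g (⊥ : Submodule A V) = ⊥ := by
  apply le_antisymm
  · rintro x ⟨w, hw, rfl⟩
    have hw0 : w = 0 := (Submodule.mem_bot A).mp hw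
    subst hw0
    simp only [map_zero]
    exact Submodule.zero_mem _
  · exact bot_le

private theorem ctr_top (g : G) : ctr ρ σ hcompat g (⊤ : Submodule A V) = ⊤ := by
  apply le_antisymm le_top
  intro x _
  exact ⟨σ g⁻¹ x, trivial, sigma_inv_cancel σ g x⟩

private theorem ctr_eq_bot_iff {g : G} {W : Submodule A V} :
    ctr ρ σ hcompat g W = ⊥ ↔ W = ⊥ := by
  constructor
  · intro h
    have := congrArg (ctr ρ σ hcompat g⁻¹) h
    rwa [ctr_inv_cancel, ctr_bot] at this
  · rintro rfl; exact ctr_bot ρ σ hcompat g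

private theorem ctr_eq_top_iff {g : G} {W : Submodule A V} :
    ctr ρ σ hcompat g W = ⊤ ↔ W = ⊤ := by
  constructor
  · intro h
    have := congrArg (ctr ρ σ hcompat g⁻¹) h
    rwa [ctr_inv_cancel, ctr_top] at this
  · rintro rfl; exact ctr_top ρ σ hcompat g

private theorem ctr_sSup (g : G) (S : Set (Submodule A V)) :
    ctr ρ σ hcompat g (sSup S) = sSup (ctr ρ σ hcompat g '' S) := by
  apply le_antisymm
  · have h1 : sSup S ≤ ctr ρ σ hcompat g⁻¹ (sSup (ctr ρ σ hcompat g '' S)) := by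
      refine sSup_le fun W hW => ?_
      have : ctr ρ σ hcompat g W ≤ sSup (ctr ρ σ hcompat g '' S) :=
        le_sSup ⟨W, hW, rfl⟩
      have := ctr_mono ρ σ hcompat (g := g⁻¹) this
      rwa [ctr_inv_cancel] at this
    have := ctr_mono ρ σ hcompat (g := g) h1
    rwa [ctr_cancel] at this
  · refine sSup_le ?_
    rintro _ ⟨W, hW, rfl⟩
    exact ctr_mono ρ σ hcompat (le_sSup hW)

private theorem ctr_iSup (g : G) {ι : Sort*} (f : ι → Submodule A V) :
    ctr ρ σ hcompat g (⨆ i, f i) = ⨆ i, ctr ρ σ hcompat g (f i) := by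
  apply le_antisymm
  · have h1 : (⨆ i, f i) ≤ ctr ρ σ hcompat g⁻¹ (⨆ i, ctr ρ σ hcompat g (f i)) := by
      refine iSup_le fun i => ?_
      have : ctr ρ σ hcompat g (f i) ≤ ⨆ i, ctr ρ σ hcompat g (f i) := le_iSup (fun i => ctr ρ σ hcompat g (f i)) i
      have := ctr_mono ρ σ hcompat (g := g⁻¹) this
      rwa [ctr_inv_cancel] at this
    have := ctr_mono ρ σ hcompat (g := g) h1
    rwa [ctr_cancel] at this
  · exact iSup_le fun i => ctr_mono ρ σ hcompat (le_iSup f i)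

private theorem ctr_iInf (g : G) {ι : Sort*} (f : ι → Submodule A V) :
    ctr ρ σ hcompat g (⨅ i, f i) = ⨅ i, ctr ρ σ hcompat g (f i) := by
  apply le_antisymm
  · exact le_iInf fun i => ctr_mono ρ σ hcompat (iInf_le f i)
  · have h1 : ctr ρ σ hcompat g⁻¹ (⨅ i, ctr ρ σ hcompat g (f i)) ≤ ⨅ i, f i := by
      refine le_iInf fun i => ?_
      have h2 := ctr_mono ρ σ hcompat (g := g⁻¹)
        (iInf_le (fun i => ctr ρ σ hcompat g (f i)) i)
      rwa [ctr_inv_cancel] at h2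
    have h3 := ctr_mono ρ σ hcompat (g := g) h1
    rwa [ctr_cancel] at h3

variable {G₀ : Subgroup G}

private theorem stableG0_def {W : Submodule A V} :
    IsStableSubmodule A (σ.comp G₀.subtype) W ↔ ∀ g ∈ G₀, ∀ v ∈ W, σ g v ∈ W := by
  constructor
  · intro h g hg v hv
    exact h ⟨g, hg⟩ v hv
  · intro h g v hv
    exact h g g.2 v hv

private theorem stable_full_iff_ctr {W : Submodule A V} :
    IsStableSubmodule A σ W ↔ ∀ g : G, ctr ρ σ hcompat g W ≤ W := by
  constructor
  · rintro h g x ⟨w, hw, rfl⟩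
    exact h g w hw
  · intro h g v hv
    exact h g ⟨v, hv, rfl⟩

private theorem stableG0_iff_ctr {W : Submodule A V} :
    IsStableSubmodule A (σ.comp G₀.subtype) W ↔ ∀ g ∈ G₀, ctr ρ σ hcompat g W ≤ W := by
  rw [stableG0_def]
  constructor
  · rintro h g hg x ⟨w, hw, rfl⟩
    exact h g hg w hw
  · intro h g hg v hv
    exact h g hg ⟨v, hv, rfl⟩

private theorem ctr_eq_of_stable {W : Submodule A V}
    (hW : IsStableSubmodule A (σ.comp G₀.subtype) W) {g : G} (hg : g ∈ G₀) :
    ctr ρ σ hcompat g W = W := by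
  apply le_antisymm ((stableG0_iff_ctr ρ σ hcompat).mp hW g hg)
  intro w hw
  exact ⟨σ g⁻¹ w, (stableG0_def σ).mp hW g⁻¹ (inv_mem hg) w hw, sigma_inv_cancel σ g w⟩

private theorem stable_ctr [G₀.Normal] {W : Submodule A V}
    (hW : IsStableSubmodule A (σ.comp G₀.subtype) W) (g : G) :
    IsStableSubmodule A (σ.comp G₀.subtype) (ctr ρ σ hcompat g W) := by
  rw [stableG0_def]
  rintro h hh x ⟨w, hw, rfl⟩
  have hmem : g⁻¹ * h * g ∈ G₀ := by
    have := Subgroup.Normal.conj_mem ‹G₀.Normal› h hh g⁻¹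
    simpa using this
  refine ⟨σ (g⁻¹ * h * g) w, (stableG0_def σ).mp hW _ hmem w hw, ?_⟩
  rw [← sigma_mul_apply, ← sigma_mul_apply]
  congr 2
  group

end CliffAux

/-- The key claim in the proof of Lemma 2.3: if `G₀ ≤ G` is a normal subgroup
of finite index and `V` is a simple `(A,G)`-module, then `V` is a sum of simple
`G₀`-stable `A`-submodules (i.e. semisimple as an `(A,G₀)`-module), and
`Len_{A,G₀}(V) ≤ [G:G₀]`. -/
theorem simple_AG_module_semisimple_over_finite_index_subgroup
    {k A G V : Type*} [Field k] [Ring A] [Algebra k A] [Group G]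
    [AddCommGroup V] [Module k V] [Module A V] [IsScalarTower k A V]
    (ρ : G →* (A ≃ₐ[k] A)) (σ : G →* (V ≃ₗ[k] V))
    (hcompat : ∀ (g : G) (a : A) (v : V), σ g (a • v) = (ρ g a) • (σ g v))
    (G₀ : Subgroup G) [G₀.Normal] (hfin : G₀.index ≠ 0)
    (hnontriv : Nontrivial V)
    (hsimple : ∀ W : Submodule A V, IsStableSubmodule A σ W → W = ⊥ ∨ W = ⊤) :
    (∃ S : Set (Submodule A V),
      (∀ W ∈ S, IsSimpleStableSubmodule A (σ.comp G₀.subtype) W) ∧ sSup S = ⊤) ∧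
      lenAG A (σ.comp G₀.subtype) ≤ (G₀.index : ℕ∞) := by
  classical
  obtain ⟨v0, hv0⟩ := exists_ne (0 : V)
  have hbot_ne_top : (⊥ : Submodule A V) ≠ ⊤ := by
    intro hbt
    have hmem : v0 ∈ (⊥ : Submodule A V) := by rw [hbt]; trivial
    exact hv0 ((Submodule.mem_bot A).mp hmem)
  -- basic stability facts
  have hPtop : IsStableSubmodule A (σ.comp G₀.subtype) (⊤ : Submodule A V) :=
    fun _ _ _ => trivial
  have hPbot : IsStableSubmodule A (σ.comp G₀.subtype) (⊥ : Submodule A V) := by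
    intro g v hv
    rw [Submodule.mem_bot] at hv ⊢
    rw [hv]
    exact map_zero _
  have hPinf : ∀ x y : Submodule A V, IsStableSubmodule A (σ.comp G₀.subtype) x →
      IsStableSubmodule A (σ.comp G₀.subtype) y →
      IsStableSubmodule A (σ.comp G₀.subtype) (x ⊓ y) := by
    intro x y hx hy g v hv
    exact ⟨hx g v hv.1, hy g v hv.2⟩
  have hPsup : ∀ x y : Submodule A V, IsStableSubmodule A (σ.comp G₀.subtype) x →
      IsStableSubmodule A (σ.comp G₀.subtype) y →
      IsStableSubmodule A (σ.comp G₀.subtype) (x ⊔ y) := by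
    intro x y hx hy g v hv
    rw [Submodule.mem_sup] at hv ⊢
    obtain ⟨a, ha, b, hb, rfl⟩ := hv
    exact ⟨_, hx g a ha, _, hy g b hb, (map_add _ _ _).symm⟩
  have hPsInf : ∀ S : Set (Submodule A V), (∀ W ∈ S, IsStableSubmodule A (σ.comp G₀.subtype) W) →
      IsStableSubmodule A (σ.comp G₀.subtype) (sInf S) := by
    intro S hS g v hv
    rw [Submodule.mem_sInf] at hv ⊢
    exact fun W hW => hS W hW g v (hv W hW)
  have hPsSup : ∀ S : Set (Submodule A V), (∀ W ∈ S, IsStableSubmodule A (σ.comp G₀.subtype) W) →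
      IsStableSubmodule A (σ.comp G₀.subtype) (sSup S) := by
    intro S hS
    rw [stableG0_iff_ctr ρ σ hcompat]
    intro g hg
    rw [ctr_sSup]
    refine sSup_le ?_
    rintro _ ⟨W, hW, rfl⟩
    rw [ctr_eq_of_stable ρ σ hcompat (hS W hW) hg]
    exact le_sSup hW
  -- coset representatives
  haveI hfinQ : Finite (G ⧸ G₀) := Nat.finite_of_card_ne_zero hfin
  obtain ⟨e⟩ : Nonempty ((G ⧸ G₀) ≃ Fin G₀.index) := ⟨Finite.equivFinOfCardEq rfl⟩
  have hmpos : 0 < G₀.index := Nat.pos_of_ne_zero hfin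
  set rep : Fin G₀.index → G := fun i => (e.symm i).out with hrep_def
  have hrep : ∀ i, (QuotientGroup.mk (rep i) : G ⧸ G₀) = e.symm i :=
    fun i => QuotientGroup.out_eq' _
  have hmove : ∀ (g : G) (i : Fin G₀.index),
      ∃ j : Fin G₀.index, ∃ h ∈ G₀, g * rep i = rep j * h := by
    intro g i
    refine ⟨e (g • e.symm i), (rep (e (g • e.symm i)))⁻¹ * (g * rep i), ?_, by group⟩
    have hq : (QuotientGroup.mk (rep (e (g • e.symm i))) : G ⧸ G₀) =
        QuotientGroup.mk (g * rep i) := by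
      rw [hrep, Equiv.symm_apply_apply, ← hrep i]
      rfl
    exact QuotientGroup.eq.mp hq
  -- generated stable submodules
  set Gen : V → Submodule A V :=
    fun x => sInf {W : Submodule A V | IsStableSubmodule A (σ.comp G₀.subtype) W ∧ x ∈ W}
    with hGen_def
  have hGenP : ∀ x, IsStableSubmodule A (σ.comp G₀.subtype) (Gen x) :=
    fun x => hPsInf _ fun W hW => hW.1
  have hGenmem : ∀ x, x ∈ Gen x := fun x => Submodule.mem_sInf.mpr fun W hW => hW.2
  have hGenle : ∀ (x : V) (W : Submodule A V),
      IsStableSubmodule A (σ.comp G₀.subtype) W → x ∈ W → Gen x ≤ W :=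
    fun x W hWP hxW => sInf_le ⟨hWP, hxW⟩
  have hGenctr : ∀ (g : G) (x : V), ctr ρ σ hcompat g (Gen x) = Gen (σ g x) := by
    intro g x
    apply le_antisymm
    · have h1 : Gen x ≤ ctr ρ σ hcompat g⁻¹ (Gen (σ g x)) := by
        refine hGenle x _ (stable_ctr ρ σ hcompat (hGenP _) g⁻¹) ?_
        exact ⟨σ g x, hGenmem _, sigma_inv_cancel' σ g x⟩
      have h2 := ctr_mono ρ σ hcompat (g := g) h1
      rwa [ctr_cancel] at h2
    · exact hGenle _ _ (stable_ctr ρ σ hcompat (hGenP x) g) ⟨x, hGenmem x, rfl⟩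
  have hGenG0 : ∀ h ∈ G₀, ∀ x : V, Gen (σ h x) = Gen x := by
    intro h hh x
    rw [← hGenctr, ctr_eq_of_stable ρ σ hcompat (hGenP x) hh]
  -- the translates of any nonzero vector generate V
  have hUtop : (⨆ i, Gen (σ (rep i) v0)) = ⊤ := by
    have hstab : IsStableSubmodule A σ (⨆ i, Gen (σ (rep i) v0)) := by
      rw [stable_full_iff_ctr ρ σ hcompat]
      intro g
      rw [ctr_iSup]
      refine iSup_le fun i => ?_
      obtain ⟨j, h, hh, hgr⟩ := hmove g i
      rw [hGenctr, ← sigma_mul_apply, hgr, sigma_mul_apply, ← hGenctr (rep j),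
        hGenG0 h hh, hGenctr]
      exact le_iSup (fun j => Gen (σ (rep j) v0)) j
    rcases hsimple _ hstab with h | h
    · exfalso
      have h1 : σ (rep ⟨0, hmpos⟩) v0 ∈ (⨆ i, Gen (σ (rep i) v0)) :=
        le_iSup (fun i => Gen (σ (rep i) v0)) ⟨0, hmpos⟩ (hGenmem _)
      rw [h, Submodule.mem_bot] at h1
      exact hv0 ((LinearEquiv.map_eq_zero_iff _).mp h1)
    · exact h
  -- a maximal proper stable submodule exists
  obtain ⟨N, hNmax⟩ : ∃ N, Maximal
      (· ∈ {W : Submodule A V | IsStableSubmodule A (σ.comp G₀.subtype) W ∧ W ≠ ⊤}) N := by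
    apply zorn_le₀
    intro c hcsub hchain
    rcases c.eq_empty_or_nonempty with rfl | hne
    · exact ⟨⊥, ⟨hPbot, hbot_ne_top⟩, by simp⟩
    · refine ⟨sSup c, ⟨hPsSup c fun W hW => (hcsub hW).1, ?_⟩, fun z hz => le_sSup hz⟩
      intro htop
      have hwit : ∀ i : Fin G₀.index, ∃ W ∈ c, σ (rep i) v0 ∈ W := by
        intro i
        have hmem : σ (rep i) v0 ∈ sSup c := by rw [htop]; trivial
        exact (Submodule.mem_sSup_of_directed hne hchain.directedOn).mp hmem
      have hcommon : ∀ s : Finset (Fin G₀.index), ∃ W ∈ c, ∀ i ∈ s, σ (rep i) v0 ∈ W := by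
        intro s
        induction s using Finset.induction_on with
        | empty => exact ⟨hne.choose, hne.choose_spec, by simp⟩
        | @insert i s _ ihs =>
          obtain ⟨W, hWc, hWs⟩ := ihs
          obtain ⟨W', hW'c, hW'i⟩ := hwit i
          rcases eq_or_ne W W' with rfl | hWW'
          · refine ⟨W, hWc, fun j hj => ?_⟩
            rcases Finset.mem_insert.mp hj with rfl | hj
            · exact hW'i
            · exact hWs j hj
          · rcases hchain hWc hW'c hWW' with hle | hle
            · refine ⟨W', hW'c, fun j hj => ?_⟩
              rcases Finset.mem_insert.mp hj with rfl | hj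
              · exact hW'i
              · exact hle (hWs j hj)
            · refine ⟨W, hWc, fun j hj => ?_⟩
              rcases Finset.mem_insert.mp hj with rfl | hj
              · exact hle hW'i
              · exact hWs j hj
      obtain ⟨W, hWc, hWall⟩ := hcommon Finset.univ
      have hUle : (⨆ i, Gen (σ (rep i) v0)) ≤ W :=
        iSup_le fun i => hGenle _ _ (hcsub hWc).1 (hWall i (Finset.mem_univ i))
      rw [hUtop] at hUle
      exact (hcsub hWc).2 (top_le_iff.mp hUle)
  have hNP : IsStableSubmodule A (σ.comp G₀.subtype) N := hNmax.1.1
  have hNtop : N ≠ ⊤ := hNmax.1.2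
  have hNco : ∀ z : Submodule A V, IsStableSubmodule A (σ.comp G₀.subtype) z →
      N ≤ z → z = N ∨ z = ⊤ := by
    intro z hz hNz
    rcases eq_or_ne z ⊤ with h | h
    · exact Or.inr h
    · exact Or.inl (le_antisymm (hNmax.2 ⟨hz, h⟩ hNz) hNz)
  -- translated coatoms
  have hNi_co : ∀ (i : Fin G₀.index) (z : Submodule A V),
      IsStableSubmodule A (σ.comp G₀.subtype) z → ctr ρ σ hcompat (rep i) N ≤ z →
      z = ctr ρ σ hcompat (rep i) N ∨ z = ⊤ := by
    intro i z hz hle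
    have h1 : N ≤ ctr ρ σ hcompat (rep i)⁻¹ z := by
      have h2 := ctr_mono ρ σ hcompat (g := (rep i)⁻¹) hle
      rwa [ctr_inv_cancel] at h2
    rcases hNco _ (stable_ctr ρ σ hcompat hz (rep i)⁻¹) h1 with h | h
    · left
      have h3 := congrArg (ctr ρ σ hcompat (rep i)) h
      rwa [ctr_cancel] at h3
    · right
      have h3 := congrArg (ctr ρ σ hcompat (rep i)) h
      rwa [ctr_cancel, ctr_top] at h3
  have hNi_netop : ∀ i, ctr ρ σ hcompat (rep i) N ≠ ⊤ :=
    fun i h => hNtop ((ctr_eq_top_iff ρ σ hcompat).mp h)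
  have hInfN : (⨅ i, ctr ρ σ hcompat (rep i) N) = ⊥ := by
    have hstab : IsStableSubmodule A σ (⨅ i, ctr ρ σ hcompat (rep i) N) := by
      rw [stable_full_iff_ctr ρ σ hcompat]
      intro g
      rw [ctr_iInf]
      refine le_iInf fun i => ?_
      obtain ⟨j, h, hh, hgr⟩ := hmove g⁻¹ i
      have e1 : rep i = g * (rep j * h) := by
        rw [← hgr]
        group
      have e2 : ctr ρ σ hcompat g (ctr ρ σ hcompat (rep j) N) = ctr ρ σ hcompat (rep i) N := by
        conv_lhs => rw [← ctr_eq_of_stable ρ σ hcompat hNP hh]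
        rw [ctr_ctr, ctr_ctr, mul_assoc, ← e1]
      calc (⨅ i', ctr ρ σ hcompat g (ctr ρ σ hcompat (rep i') N))
          ≤ ctr ρ σ hcompat g (ctr ρ σ hcompat (rep j) N) :=
            iInf_le (fun i' => ctr ρ σ hcompat g (ctr ρ σ hcompat (rep i') N)) j
        _ = ctr ρ σ hcompat (rep i) N := e2
    rcases hsimple _ hstab with h | h
    · exact h
    · exfalso
      have h1 : (⊤ : Submodule A V) ≤ ctr ρ σ hcompat (rep ⟨0, hmpos⟩) N := by
        rw [← h]
        exact iInf_le (fun i => ctr ρ σ hcompat (rep i) N) ⟨0, hmpos⟩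
      exact hNi_netop ⟨0, hmpos⟩ (top_le_iff.mp h1)
  -- the chain bound
  have key : ∀ (n : ℕ) (W : Fin (n + 1) → Submodule A V), StrictMono W →
      (∀ j, IsStableSubmodule A (σ.comp G₀.subtype) (W j)) → n ≤ G₀.index := by
    intro n W hWm hWP
    exact chain_bound_aux (fun W => IsStableSubmodule A (σ.comp G₀.subtype) W)
      hPinf hPsup G₀.index ⊥ ⊤ bot_le (fun i => ctr ρ σ hcompat (rep i) N)
      (fun i => stable_ctr ρ σ hcompat hNP (rep i)) (fun _ => bot_le) (fun _ => le_top)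
      (fun i z hz h1 _ => hNi_co i z hz h1) (by rw [top_inf_eq, hInfN]) n W hWm hWP
      (fun _ => bot_le) (fun _ => le_top)
  -- existence of a simple stable submodule
  have hex : ∃ W0 : Submodule A V, IsSimpleStableSubmodule A (σ.comp G₀.subtype) W0 := by
    by_contra hcon
    push_neg at hcon
    have hstep : ∀ W : Submodule A V, IsStableSubmodule A (σ.comp G₀.subtype) W → W ≠ ⊥ →
        ∃ W' : Submodule A V, IsStableSubmodule A (σ.comp G₀.subtype) W' ∧ W' ≠ ⊥ ∧ W' < W := by
      intro W hWP hWb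
      have h1 := hcon W
      rw [IsSimpleStableSubmodule] at h1
      push_neg at h1
      obtain ⟨W', hW'P, hW'le, hW'⟩ := h1 hWP hWb
      exact ⟨W', hW'P, hW'.1, lt_of_le_of_ne hW'le hW'.2⟩
    obtain ⟨F, hF⟩ : ∃ F : {W : Submodule A V //
        IsStableSubmodule A (σ.comp G₀.subtype) W ∧ W ≠ ⊥} →
        {W : Submodule A V // IsStableSubmodule A (σ.comp G₀.subtype) W ∧ W ≠ ⊥},
        ∀ p, (F p).1 < p.1 :=
      ⟨fun p => ⟨(hstep p.1 p.2.1 p.2.2).choose, (hstep p.1 p.2.1 p.2.2).choose_spec.1,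
        (hstep p.1 p.2.1 p.2.2).choose_spec.2.1⟩,
        fun p => (hstep p.1 p.2.1 p.2.2).choose_spec.2.2⟩
    have htopne : (⊤ : Submodule A V) ≠ ⊥ := fun h => hbot_ne_top h.symm
    set p0 : {W : Submodule A V // IsStableSubmodule A (σ.comp G₀.subtype) W ∧ W ≠ ⊥} :=
      ⟨⊤, hPtop, htopne⟩ with hp0
    have hdec : ∀ n : ℕ, (F^[n + 1] p0).1 < (F^[n] p0).1 := by
      intro n
      rw [Function.iterate_succ_apply']
      exact hF _
    have hanti : StrictAnti (fun n : ℕ => (F^[n] p0).1) := strictAnti_nat_of_succ_lt hdec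
    have hchainm := key (G₀.index + 1)
      (fun j : Fin (G₀.index + 2) => (F^[G₀.index + 1 - (j : ℕ)] p0).1)
      (fun p q hpq => by
        have h1 : (p : ℕ) < (q : ℕ) := hpq
        have h2 := q.isLt
        exact hanti (by omega))
      (fun j => (F^[G₀.index + 1 - (j : ℕ)] p0).2.1)
    omega
  -- conclusion
  refine ⟨⟨{W : Submodule A V | IsSimpleStableSubmodule A (σ.comp G₀.subtype) W},
    fun W hW => hW, ?_⟩, ?_⟩
  · have hstab : IsStableSubmodule A σ
        (sSup {W : Submodule A V | IsSimpleStableSubmodule A (σ.comp G₀.subtype) W}) := by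
      rw [stable_full_iff_ctr ρ σ hcompat]
      intro g
      rw [ctr_sSup]
      refine sSup_le ?_
      rintro _ ⟨W, hWS, rfl⟩
      refine le_sSup ?_
      obtain ⟨hW1, hW2, hW3⟩ := hWS
      refine ⟨stable_ctr ρ σ hcompat hW1 g, ?_, ?_⟩
      · intro hb
        exact hW2 ((ctr_eq_bot_iff ρ σ hcompat).mp hb)
      · intro W' hW'P hW'le
        have h1 : ctr ρ σ hcompat g⁻¹ W' ≤ W := by
          have h2 := ctr_mono ρ σ hcompat (g := g⁻¹) hW'le
          rwa [ctr_inv_cancel] at h2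
        rcases hW3 _ (stable_ctr ρ σ hcompat hW'P g⁻¹) h1 with h | h
        · left
          have h3 := congrArg (ctr ρ σ hcompat g) h
          rwa [ctr_cancel, ctr_bot] at h3
        · right
          have h3 := congrArg (ctr ρ σ hcompat g) h
          rwa [ctr_cancel] at h3
    rcases hsimple _ hstab with h | h
    · exfalso
      obtain ⟨W0, hW0⟩ := hex
      have hle : W0 ≤ ⊥ := h ▸ le_sSup (show W0 ∈ _ from hW0)
      exact hW0.2.1 (le_bot_iff.mp hle)
    · exact h
  · rw [lenAG]
    refine iSup_le fun n => iSup_le fun hch => ?_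
    obtain ⟨W, hWm, hWP⟩ := hch
    exact Nat.cast_le.mpr (key n W hWm hWP)
end

section
/- Assume that A is semisimple as a module over the group algebra k[G] (for the action of G on A by the given algebra automorphisms), and let V be an (A,G)-module that is semisimple as a k[G]-module. Then the space of G-invariants V^G is a module over the invariant subalgebra A^G, and the length of V^G as an A^G-module is at most Len_{A,G}(V). (Proposition 2.2 of the paper; there G is a reductive algebraic group acting rationally in characteristic 0, so both semisimplicity hypotheses hold automatically.) -/
/-- The length of the space of invariants `V^G` as a module over the invariant
subalgebra `A^G`: the supremum of all `n` for which there is a strictly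
increasing chain `W₀ ⊊ ⋯ ⊊ Wₙ` of `A^G`-submodules of `V^G` (encoded as
`k`-submodules of `V` consisting of `G`-invariant vectors and stable under
multiplication by every `G`-invariant element of `A`). -/
noncomputable def lenInvariants (A : Type*) {k G V : Type*} [Field k] [Group G]
    [AddCommGroup V] [Module k V] [Ring A] [Algebra k A] [Module A V]
    (ρ : G →* (A ≃ₐ[k] A)) (σ : G →* (V ≃ₗ[k] V)) : ℕ∞ :=
  ⨆ (n : ℕ) (_ : ∃ W : Fin (n + 1) → Submodule k V,
      StrictMono W ∧ ∀ i,
        (∀ v ∈ W i, ∀ g : G, σ g v = v) ∧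
        (∀ a : A, (∀ g : G, ρ g a = a) → ∀ v ∈ W i, a • v ∈ W i)), (n : ℕ∞)

/-! Semisimplicity splits `A = A^G ⊕ N_A` and `V = V^G ⊕ N_V`, where `N` is spanned by the vectors
`g • x - x`, and `N_A • V^G ⊆ N_V`. So for an `A^G`-submodule `W ⊆ V^G`, projecting `A • W` onto
`V^G` along `N_V` lands in `A^G • W = W`, whence `A • W ∩ V^G = W`. Thus `W ↦ A • W` carries a
strict chain of `A^G`-submodules of `V^G` to a strict chain of `G`-stable `A`-submodules of `V`. -/

theorem Subrepresentation.isCompl_toSubmodule_iff {k G M : Type*} [Semiring k] [Monoid G]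
    [AddCommMonoid M] [Module k M] {ρ : Representation k G M} {S T : Subrepresentation ρ} :
    IsCompl S.toSubmodule T.toSubmodule ↔ IsCompl S T := by
  have hbot : (⊥ : Subrepresentation ρ).toSubmodule = ⊥ := rfl
  have htop : (⊤ : Subrepresentation ρ).toSubmodule = ⊤ := rfl
  simp only [isCompl_iff, disjoint_iff, codisjoint_iff, ← hbot, ← htop,
    ← Subrepresentation.toSubmodule_inf, ← Subrepresentation.toSubmodule_sup,
    Subrepresentation.toSubmodule_injective.eq_iff]

namespace Representation

theorem isSemisimpleRepresentation_of_exists_isCompl {k G M : Type*} [Field k] [Monoid G]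
    [AddCommGroup M] [Module k M] {ρ : Representation k G M}
    (h : ∀ W : Submodule k M, (∀ g, ∀ x ∈ W, ρ g x ∈ W) →
      ∃ W' : Submodule k M, (∀ g, ∀ x ∈ W', ρ g x ∈ W') ∧ IsCompl W W') :
    IsSemisimpleRepresentation ρ where
  exists_isCompl S := by
    obtain ⟨W', hW', hcompl⟩ := h S.toSubmodule fun g _ hx => S.apply_mem_toSubmodule g hx
    exact ⟨⟨W', fun g _ hx => hW' g _ hx⟩, Subrepresentation.isCompl_toSubmodule_iff.mp hcompl⟩

theorem Coinvariants.ker_le_comap {k G M : Type*} [CommRing k] [Monoid G] [AddCommGroup M]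
    [Module k M] (ρ : Representation k G M) (g : G) :
    Coinvariants.ker ρ ≤ (Coinvariants.ker ρ).comap (ρ g) :=
  Submodule.span_le.2 fun _ ⟨⟨h, x⟩, hx⟩ => by
    subst hx
    have hsplit : ρ g (ρ h x - x) = (ρ (g * h) x - x) - (ρ g x - x) := by
      rw [map_mul, map_sub, Module.End.mul_apply]; abel
    rw [SetLike.mem_coe, Submodule.mem_comap, hsplit]
    exact sub_mem (sub_mem_ker _ _) (sub_mem_ker _ _)

theorem isCompl_invariants_coinvariantsKer {k G M : Type*} [Field k] [Group G] [AddCommGroup M]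
    [Module k M] (ρ : Representation k G M) [IsSemisimpleRepresentation ρ] :
    IsCompl (invariants ρ) (Coinvariants.ker ρ) := by
  obtain ⟨C, hC⟩ := exists_isCompl (⟨invariants ρ, fun g v hv => by
    rwa [(mem_invariants ρ v).mp hv g]⟩ : Subrepresentation ρ)
  obtain ⟨D, hD⟩ := exists_isCompl
    (⟨Coinvariants.ker ρ, fun g _ hv => Coinvariants.ker_le_comap ρ g hv⟩ : Subrepresentation ρ)
  rw [← Subrepresentation.isCompl_toSubmodule_iff] at hC hD
  constructor
  · -- `ρ g` fixes the invariant component of `x`, so `ρ g x - x` lies in the stable complement `C`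
    refine hC.disjoint.mono_right (Submodule.span_le.2 ?_)
    rintro _ ⟨⟨g, x⟩, rfl⟩
    obtain ⟨u, hu, c, hc, rfl⟩ := Submodule.mem_sup.1 (hC.sup_eq_top ▸ Submodule.mem_top :
      x ∈ invariants ρ ⊔ C.toSubmodule)
    have hsub : ρ g (u + c) - (u + c) = ρ g c - c := by
      rw [map_add, (mem_invariants ρ u).1 hu g]; abel
    change ρ g (u + c) - (u + c) ∈ C.toSubmodule
    rw [hsub]
    exact sub_mem (C.apply_mem_toSubmodule g hc) hc
  · -- for `c` in the stable complement `D`, `ρ g c - c` lies in both `D` and the kernel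
    refine (hD.codisjoint.mono_right fun c hc => ?_).symm
    refine (mem_invariants ρ c).2 fun g => sub_eq_zero.1 ?_
    exact Submodule.disjoint_def.1 hD.disjoint _ (Coinvariants.sub_mem_ker g c)
      (sub_mem (D.apply_mem_toSubmodule g hc) hc)

section Equivariant

variable {k A G V : Type*} [CommRing k] [Ring A] [Module k A] [Group G] [AddCommGroup V]
  [Module k V] [Module A V] {τ : Representation k G A} {π : Representation k G V}

theorem smul_mem_coinvariantsKer [IsScalarTower k A V]
    (hcompat : ∀ g (a : A) (v : V), π g (a • v) = τ g a • π g v)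
    {w : V} (hw : w ∈ invariants π) {n : A} (hn : n ∈ Coinvariants.ker τ) :
    n • w ∈ Coinvariants.ker π := by
  have hle : Coinvariants.ker τ ≤
      (Coinvariants.ker π).comap ((LinearMap.toSpanSingleton A V w).restrictScalars k) := by
    refine Submodule.span_le.2 ?_
    rintro _ ⟨⟨g, a⟩, rfl⟩
    have hdiff : (τ g a - a) • w = π g (a • w) - a • w := by
      rw [sub_smul, hcompat, (mem_invariants π w).1 hw g]
    simpa [hdiff] using Coinvariants.sub_mem_ker g (a • w)
  simpa using hle hn

theorem mem_of_mem_span_of_mem_invariants [IsScalarTower k A V]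
    (hcompat : ∀ g (a : A) (v : V), π g (a • v) = τ g a • π g v)
    (hA : Codisjoint (invariants τ) (Coinvariants.ker τ))
    (hV : IsCompl (invariants π) (Coinvariants.ker π))
    {W : Submodule k V} (hWinv : W ≤ invariants π)
    (hWsmul : ∀ a ∈ invariants τ, ∀ v ∈ W, a • v ∈ W)
    {v : V} (hv : v ∈ Submodule.span A (W : Set V)) (hvinv : v ∈ invariants π) : v ∈ W := by
  set P := (invariants π).projection (Coinvariants.ker π) hV
  -- an `A`-submodule, so it contains `span A W` once it contains `W`; then take `a = 1`
  let T : Submodule A V :=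
    { carrier := {x | ∀ a : A, P (a • x) ∈ W}
      add_mem' := fun hx hy a => by rw [smul_add, map_add]; exact add_mem (hx a) (hy a)
      zero_mem' := fun a => by rw [smul_zero, map_zero]; exact zero_mem W
      smul_mem' := fun b x hx a => by rw [smul_smul]; exact hx (a * b) }
  have hWT : (W : Set V) ⊆ T := by
    intro w hw a
    obtain ⟨a₀, n, ha₀, hn, rfl⟩ := Submodule.codisjoint_iff_exists_add_eq.1 hA a
    have h₀ : a₀ • w ∈ invariants π := (mem_invariants π _).2 fun g => by
      rw [hcompat, (mem_invariants τ a₀).1 ha₀ g, (mem_invariants π w).1 (hWinv hw) g]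
    have hn' := smul_mem_coinvariantsKer hcompat (hWinv hw) hn
    show P ((a₀ + n) • w) ∈ W
    rw [add_smul, map_add, Submodule.projection_apply_of_mem_left hV h₀,
      Submodule.projection_apply_of_mem_right hV hn', add_zero]
    exact hWsmul a₀ ha₀ w hw
  simpa [P, Submodule.projection_apply_of_mem_left hV hvinv] using Submodule.span_le.2 hWT hv 1

theorem apply_mem_span_of_subset_invariants
    (hcompat : ∀ g (a : A) (v : V), π g (a • v) = τ g a • π g v)
    {S : Set V} (hS : S ⊆ invariants π) (g : G) {v : V} (hv : v ∈ Submodule.span A S) :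
    π g v ∈ Submodule.span A S := by
  induction hv using Submodule.span_induction with
  | mem x hx => rw [(mem_invariants π x).1 (hS hx) g]; exact Submodule.subset_span hx
  | zero => rw [map_zero]; exact zero_mem _
  | add x y _ _ hx hy => rw [map_add]; exact add_mem hx hy
  | smul a x _ hx => rw [hcompat]; exact Submodule.smul_mem _ _ hx

theorem span_lt_span_of_lt [IsScalarTower k A V]
    (hcompat : ∀ g (a : A) (v : V), π g (a • v) = τ g a • π g v)
    (hA : Codisjoint (invariants τ) (Coinvariants.ker τ))
    (hV : IsCompl (invariants π) (Coinvariants.ker π))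
    {W₁ W₂ : Submodule k V} (h₁inv : W₁ ≤ invariants π)
    (h₁smul : ∀ a ∈ invariants τ, ∀ v ∈ W₁, a • v ∈ W₁) (h₂inv : W₂ ≤ invariants π)
    (hlt : W₁ < W₂) :
    Submodule.span A (W₁ : Set V) < Submodule.span A (W₂ : Set V) :=
  lt_of_le_of_ne (Submodule.span_mono hlt.le) fun heq => hlt.not_ge fun _ hv =>
    mem_of_mem_span_of_mem_invariants hcompat hA hV h₁inv h₁smul
      (heq ▸ Submodule.subset_span hv) (h₂inv hv)

end Equivariant

end Representation

/-- Proposition 2.2: if `A` and `V` are semisimple as `k[G]`-modules (i.e. every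
`G`-stable `k`-subspace admits a `G`-stable complement), then the length of
`V^G` as an `A^G`-module is at most `Len_{A,G}(V)`. -/
theorem lenInvariants_le_lenAG
    {k A G V : Type*} [Field k] [Ring A] [Algebra k A] [Group G]
    [AddCommGroup V] [Module k V] [Module A V] [IsScalarTower k A V]
    (ρ : G →* (A ≃ₐ[k] A)) (σ : G →* (V ≃ₗ[k] V))
    (hcompat : ∀ (g : G) (a : A) (v : V), σ g (a • v) = (ρ g a) • (σ g v))
    (hAss : ∀ W : Submodule k A, (∀ g : G, ∀ a ∈ W, ρ g a ∈ W) →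
      ∃ W' : Submodule k A, (∀ g : G, ∀ a ∈ W', ρ g a ∈ W') ∧ IsCompl W W')
    (hVss : ∀ W : Submodule k V, (∀ g : G, ∀ v ∈ W, σ g v ∈ W) →
      ∃ W' : Submodule k V, (∀ g : G, ∀ v ∈ W', σ g v ∈ W') ∧ IsCompl W W') :
    lenInvariants A ρ σ ≤ lenAG A σ := by
  let τ : Representation k G A := (AlgEquiv.toLinearMapHom k A).comp ρ
  let π : Representation k G V := LinearEquiv.automorphismGroup.toLinearMapMonoidHom.comp σ
  have hτπ : ∀ g (a : A) (v : V), π g (a • v) = τ g a • π g v := hcompat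
  have : τ.IsSemisimpleRepresentation :=
    Representation.isSemisimpleRepresentation_of_exists_isCompl hAss
  have : π.IsSemisimpleRepresentation :=
    Representation.isSemisimpleRepresentation_of_exists_isCompl hVss
  have hA := (Representation.isCompl_invariants_coinvariantsKer τ).codisjoint
  have hV := Representation.isCompl_invariants_coinvariantsKer π
  refine iSup₂_le fun n ⟨W, hWmono, hW⟩ => le_iSup₂_of_le n
    ⟨fun i => Submodule.span A (W i : Set V), fun i j hij => ?_, fun i g _ hv => ?_⟩ le_rfl
  · exact Representation.span_lt_span_of_lt hτπ hA hV (hW i).1 (hW i).2 (hW j).1 (hWmono hij)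
  · exact Representation.apply_mem_span_of_subset_invariants hτπ (hW i).1 g hv
end
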